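/- arXiv:0706.3620 — 2 statements merged into one kernel-verified Lean document; each statement's English description precedes it below -/
import Mathlib

section
/- Under the Nevai class BV ∩ M(0,1) assumption, every point of supp μ lying outside [−1,1] is strictly less than −1; in particular supp μ ∩ (1, ∞) = ∅ (the set A of mass points satisfies A ⊂ (−∞, −1)). -/
open Filter Topology MeasureTheory

noncomputable section

/-- `m` is an `α`-mean on `ℓ∞(ℕ₀)` for the polynomial hypergroup with
linearization coefficients `g`: `m(α) = 1` and `m(T_n f) = α(n) · m(f)` for all `n`
and all bounded `f`, where `(T_n f)(k) = Σ_{j≤n+k} g(n,k,j) f(j)`. -/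
def IsAlphaMean (g : ℕ → ℕ → ℕ → ℝ) (α : BoundedContinuousFunction ℕ ℝ)
    (m : BoundedContinuousFunction ℕ ℝ →L[ℝ] ℝ) : Prop :=
  m α = 1 ∧
    ∀ (n : ℕ) (f Tf : BoundedContinuousFunction ℕ ℝ),
      (∀ k : ℕ, Tf k = ∑ j ∈ Finset.range (n + k + 1), g n k j * f j) →
      m Tf = α n * m f

/-- The support of a measure on `ℝ`: the points all of whose open
neighbourhoods have positive measure. -/
def measSupport (μ : Measure ℝ) : Set ℝ :=
  {y : ℝ | ∀ U : Set ℝ, IsOpen U → y ∈ U → 0 < μ U}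

/-!
Suppose `μ` charges `(t, ∞)` for some `t > 1`. Evaluating the recurrence at `1` gives
`a n + b n + c n = 1`, so for `y > t` the recurrence forces `p n y ≥ r ^ n` with a fixed
`r > 1` (using that `a n` is bounded, which follows from `b n` being bounded below).
On the other hand, integrating the linearization `p n ^ 2 = Σ g(n,n,j) p j` against the
orthogonality measure gives `∫ p n ^ 2 dμ = g(n,n,0)`, and evaluating it at `1` gives
`Σ_j g(n,n,j) = 1`, so by nonnegativity `∫ p n ^ 2 dμ ≤ 1`. Both cannot hold.
-/

section Recurrence

variable {a b c : ℕ → ℝ}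

theorem add_add_eq_one_of_recurrence {p : ℕ → ℝ → ℝ}
    (hrec : ∀ n : ℕ, 1 ≤ n → ∀ y : ℝ,
      p 1 y * p n y = a n * p (n + 1) y + b n * p n y + c n * p (n - 1) y)
    (hnorm : ∀ n : ℕ, p n 1 = 1) {n : ℕ} (hn : 1 ≤ n) : a n + b n + c n = 1 := by
  simpa [hnorm] using (hrec n hn 1).symm

theorem continuous_of_recurrence {p : ℕ → ℝ → ℝ} (ha : ∀ n : ℕ, a n ≠ 0)
    (hrec : ∀ n : ℕ, 1 ≤ n → ∀ y : ℝ,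
      p 1 y * p n y = a n * p (n + 1) y + b n * p n y + c n * p (n - 1) y)
    (h0 : Continuous (p 0)) (h1 : Continuous (p 1)) : ∀ n, Continuous (p n) := by
  refine Nat.twoStepInduction h0 h1 fun n hn hn1 => ?_
  have hp : p (n + 2) = fun y =>
      (p 1 y * p (n + 1) y - b (n + 1) * p (n + 1) y - c (n + 1) * p n y) / a (n + 1) := by
    funext y
    have := hrec (n + 1) (Nat.le_add_left 1 n) y
    simp only [Nat.add_sub_cancel] at this
    rw [eq_div_iff (ha _)]
    linarith
  rw [hp]
  fun_prop

theorem pow_le_of_recurrence {u : ℕ → ℝ} {r : ℝ} (ha : ∀ n : ℕ, 0 < a n)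
    (hc : ∀ n : ℕ, 1 ≤ n → 0 ≤ c n) (habc : ∀ n : ℕ, 1 ≤ n → a n + b n + c n = 1)
    (hrec : ∀ n : ℕ, 1 ≤ n → u 1 * u n = a n * u (n + 1) + b n * u n + c n * u (n - 1))
    (hr : 1 ≤ r) (hu0 : u 0 = 1) (hu1 : r ≤ u 1)
    (hra : ∀ n : ℕ, 1 ≤ n → (r - 1) * a n ≤ u 1 - 1) (n : ℕ) : r ^ n ≤ u n := by
  suffices h : ∀ n, r ^ n ≤ u n ∧ r * u n ≤ u (n + 1) from (h n).1
  intro n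
  induction n with
  | zero => simpa [hu0] using hu1
  | succ n ih =>
    obtain ⟨hpow, hstep⟩ := ih
    have hun : 0 ≤ u n := (pow_nonneg (by linarith) n).trans hpow
    have hmono : u n ≤ u (n + 1) := by nlinarith
    refine ⟨by rw [pow_succ']; nlinarith, ?_⟩
    have hn := Nat.le_add_left 1 n
    have hrec' := hrec (n + 1) hn
    simp only [Nat.add_sub_cancel] at hrec'
    -- `u n ≤ u (n + 1)` and `b + c = 1 - a` give `a u (n+2) ≥ (a + u 1 - 1) u (n+1) ≥ r a u (n+1)`
    have key : r * a (n + 1) * u (n + 1) ≤ a (n + 1) * u (n + 2) := by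
      nlinarith [habc (n + 1) hn, hra (n + 1) hn, hc (n + 1) hn]
    nlinarith [ha (n + 1)]

theorem exists_forall_le_of_recurrence (hc : ∀ n : ℕ, 1 ≤ n → 0 < c n)
    (habc : ∀ n : ℕ, 1 ≤ n → a n + b n + c n = 1) {L : ℝ} (hb : ∀ n : ℕ, 1 ≤ n → L ≤ b n) :
    ∃ A : ℝ, 1 ≤ A ∧ ∀ n, a n ≤ A := by
  refine ⟨max 1 (max (a 0) (1 - L)), le_max_left _ _, fun n => ?_⟩
  rcases Nat.eq_zero_or_pos n with rfl | hn
  · exact (le_max_left _ _).trans (le_max_right _ _)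
  · have : a n ≤ 1 - L := by linarith [habc n hn, hc n hn, hb n hn]
    exact this.trans ((le_max_right _ _).trans (le_max_right _ _))

theorem exists_one_lt_forall_pow_le_of_recurrence {p : ℕ → ℝ → ℝ} (ha : ∀ n : ℕ, 0 < a n)
    (hc : ∀ n : ℕ, 1 ≤ n → 0 ≤ c n) (hp0 : ∀ y : ℝ, p 0 y = 1)
    (hp1 : ∀ y : ℝ, p 1 y = (y - b 0) / a 0)
    (hrec : ∀ n : ℕ, 1 ≤ n → ∀ y : ℝ,
      p 1 y * p n y = a n * p (n + 1) y + b n * p n y + c n * p (n - 1) y)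
    (hnorm : ∀ n : ℕ, p n 1 = 1) {A : ℝ} (hA1 : 1 ≤ A) (haA : ∀ n, a n ≤ A) {t : ℝ}
    (ht : 1 < t) : ∃ r, 1 < r ∧ ∀ n, ∀ y, t < y → r ^ n ≤ p n y := by
  have ha0 := ha 0
  have hp1_sub : ∀ y, p 1 y - 1 = (y - 1) / a 0 := fun y => by
    have h1 := hnorm 1
    rw [hp1, div_eq_one_iff_eq ha0.ne'] at h1
    rw [hp1, eq_div_iff ha0.ne', sub_mul, div_mul_cancel₀ _ ha0.ne']
    linarith
  have hδ : 0 < (t - 1) / (a 0 * A) := div_pos (by linarith) (mul_pos ha0 (by linarith))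
  have hδ_mul : ∀ z, z ≤ A → (t - 1) / (a 0 * A) * z ≤ (t - 1) / a 0 := fun z hz =>
    calc (t - 1) / (a 0 * A) * z ≤ (t - 1) / (a 0 * A) * A :=
          mul_le_mul_of_nonneg_left hz hδ.le
      _ = (t - 1) / a 0 := by field_simp
  refine ⟨1 + (t - 1) / (a 0 * A), by linarith, fun n y hy => ?_⟩
  have hty : (t - 1) / a 0 ≤ p 1 y - 1 := by
    rw [hp1_sub]
    exact div_le_div_of_nonneg_right (by linarith) ha0.le
  refine pow_le_of_recurrence (u := fun n => p n y) ha hc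
    (fun n hn => add_add_eq_one_of_recurrence hrec hnorm hn) (fun n hn => hrec n hn y)
    (by linarith) (hp0 y) (by linarith [hδ_mul 1 hA1]) (fun n _ => ?_) n
  rw [add_sub_cancel_left]
  exact (hδ_mul _ (haA n)).trans hty

end Recurrence

section Linearization

variable {α : Type*} {p : ℕ → α → ℝ} {g : ℕ → ℕ → ℕ → ℝ}

theorem sum_linearization_eq_one
    (hg : ∀ n k : ℕ, ∀ y : α, p n y * p k y = ∑ j ∈ Finset.range (n + k + 1), g n k j * p j y)
    {x₀ : α} (hnorm : ∀ n : ℕ, p n x₀ = 1) (n k : ℕ) :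
    ∑ j ∈ Finset.range (n + k + 1), g n k j = 1 := by
  simpa [hnorm] using (hg n k x₀).symm

theorem integral_mul_eq_linearization_zero [MeasurableSpace α] {μ : Measure α} [IsProbabilityMeasure μ]
    (hg : ∀ n k : ℕ, ∀ y : α, p n y * p k y = ∑ j ∈ Finset.range (n + k + 1), g n k j * p j y)
    (hp0 : ∀ y : α, p 0 y = 1) (horth : ∀ n k : ℕ, n ≠ k → ∫ y, p n y * p k y ∂μ = 0)
    (hint : ∀ n, Integrable (p n) μ) (n k : ℕ) : ∫ y, p n y * p k y ∂μ = g n k 0 := by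
  have hmom : ∀ j, j ≠ 0 → ∫ y, p j y ∂μ = 0 := fun j hj => by
    simpa [hp0] using horth 0 j hj.symm
  simp_rw [hg n k]
  rw [integral_finsetSum _ fun j _ => (hint j).const_mul _]
  simp_rw [integral_const_mul]
  rw [Finset.sum_eq_single 0 (fun j _ hj => by rw [hmom j hj, mul_zero]) (by simp)]
  simp [hp0]

theorem integral_sq_le_one [MeasurableSpace α] {μ : Measure α} [IsProbabilityMeasure μ]
    (hg : ∀ n k : ℕ, ∀ y : α, p n y * p k y = ∑ j ∈ Finset.range (n + k + 1), g n k j * p j y)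
    (hgnn : ∀ n k j : ℕ, 0 ≤ g n k j) {x₀ : α} (hnorm : ∀ n : ℕ, p n x₀ = 1)
    (hp0 : ∀ y : α, p 0 y = 1) (horth : ∀ n k : ℕ, n ≠ k → ∫ y, p n y * p k y ∂μ = 0)
    (hint : ∀ n, Integrable (p n) μ) (n : ℕ) : ∫ y, p n y ^ 2 ∂μ ≤ 1 := by
  simp_rw [sq, integral_mul_eq_linearization_zero hg hp0 horth hint,
    ← sum_linearization_eq_one hg hnorm n n]
  exact Finset.single_le_sum (fun j _ => hgnn n n j) (by simp)

end Linearization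

theorem measure_eq_zero_of_pow_le_of_integral_le {α : Type*} [MeasurableSpace α]
    {μ : Measure α} [IsFiniteMeasure μ] {f : ℕ → α → ℝ} {S : Set α} (hS : MeasurableSet S)
    {r C : ℝ} (hr : 1 < r) (hf0 : ∀ n y, 0 ≤ f n y) (hint : ∀ n, Integrable (f n) μ)
    (hfS : ∀ n, ∀ y ∈ S, r ^ n ≤ f n y) (hC : ∀ n, ∫ y, f n y ∂μ ≤ C) : μ S = 0 := by
  by_contra hS0
  have hm : 0 < μ.real S := ENNReal.toReal_pos hS0 (measure_ne_top _ _)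
  obtain ⟨n, hn⟩ := pow_unbounded_of_one_lt (C / μ.real S) hr
  have : r ^ n * μ.real S ≤ C :=
    calc r ^ n * μ.real S ≤ ∫ y in S, f n y ∂μ :=
          setIntegral_ge_of_const_le_real hS (measure_ne_top _ _) (hfS n) (hint n).integrableOn
      _ ≤ ∫ y, f n y ∂μ := setIntegral_le_integral (hint n) (ae_of_all _ (hf0 n))
      _ ≤ C := hC n
  exact absurd ((div_lt_iff₀ hm).1 hn) this.not_gt

theorem Continuous.integrable_of_ae_mem_isCompact {X E : Type*} [TopologicalSpace X]
    [MeasurableSpace X] [OpensMeasurableSpace X] [T2Space X] [NormedAddCommGroup E]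
    {μ : Measure X} [IsFiniteMeasureOnCompacts μ] {f : X → E} (hf : Continuous f) {K : Set X} (hK : IsCompact K) (hKc : μ Kᶜ = 0) :
    Integrable f μ := by
  rw [← Measure.restrict_eq_self_of_ae_mem (ae_iff.2 hKc)]
  exact hf.continuousOn.integrableOn_compact hK

theorem stmt7_general    (a b c : ℕ → ℝ)
    (ha : ∀ n : ℕ, 0 < a n) (hc : ∀ n : ℕ, 1 ≤ n → 0 < c n)
    (p : ℕ → ℝ → ℝ)
    (hp0 : ∀ y : ℝ, p 0 y = 1)
    (hp1 : ∀ y : ℝ, p 1 y = (y - b 0) / a 0)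
    (hrec : ∀ n : ℕ, 1 ≤ n → ∀ y : ℝ,
      p 1 y * p n y = a n * p (n + 1) y + b n * p n y + c n * p (n - 1) y)
    (hnorm : ∀ n : ℕ, p n 1 = 1)
    (g : ℕ → ℕ → ℕ → ℝ)
    (hg : ∀ n k : ℕ, ∀ y : ℝ,
      p n y * p k y = ∑ j ∈ Finset.range (n + k + 1), g n k j * p j y)
    (hgnn : ∀ n k j : ℕ, 0 ≤ g n k j)
    (μ : Measure ℝ) [IsProbabilityMeasure μ]
    (hcsupp : ∃ K : Set ℝ, IsCompact K ∧ μ Kᶜ = 0)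
    (horth : ∀ n k : ℕ, n ≠ k → ∫ y, p n y * p k y ∂μ = 0)
    (beta : ℕ → ℝ)
    (hbeta : ∀ n : ℕ, 1 ≤ n → beta n = a 0 * b n + b 0)
    (hNevai2 : Tendsto beta atTop (𝓝 0))
 :
    ∀ x ∈ measSupport μ, x ∉ Set.Icc (-1 : ℝ) 1 → x < -1 := by
  intro x hx hxI
  by_contra! hx_ge
  have hx1 : 1 < x := by
    by_contra! hx_le
    exact hxI ⟨hx_ge, hx_le⟩
  obtain ⟨K, hK, hKc⟩ := hcsupp
  have hcont : ∀ n, Continuous (p n) := continuous_of_recurrence (fun n => (ha n).ne') hrec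
    (continuous_const.congr fun y => (hp0 y).symm)
    (((continuous_id.sub continuous_const).div_const _).congr fun y => (hp1 y).symm)
  have hint : ∀ n, Integrable (p n) μ := fun n =>
    (hcont n).integrable_of_ae_mem_isCompact hK hKc
  obtain ⟨L, hL⟩ := hNevai2.bddBelow_range
  obtain ⟨A, hA1, haA⟩ := exists_forall_le_of_recurrence hc
    (fun n hn => add_add_eq_one_of_recurrence hrec hnorm hn) (L := (L - b 0) / a 0)
    fun n hn => by
      rw [div_le_iff₀ (ha 0)]
      linarith [hL ⟨n, rfl⟩, hbeta n hn]
  obtain ⟨t, ht1, htx⟩ := exists_between hx1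
  obtain ⟨r, hr1, hgrow⟩ := exists_one_lt_forall_pow_le_of_recurrence ha
    (fun n hn => (hc n hn).le) hp0 hp1 hrec hnorm hA1 haA ht1
  have hzero : μ (Set.Ioi t) = 0 :=
    measure_eq_zero_of_pow_le_of_integral_le measurableSet_Ioi (one_lt_pow₀ hr1 two_ne_zero)
      (fun n y => sq_nonneg (p n y))
      (fun n => ((hcont n).pow 2).integrable_of_ae_mem_isCompact hK hKc)
      (fun n y hy => by
        rw [← pow_mul, mul_comm, pow_mul]
        exact pow_le_pow_left₀ (by positivity) (hgrow n y hy) 2)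
      (integral_sq_le_one hg hgnn hnorm hp0 horth hint)
  exact (hx _ isOpen_Ioi htx).ne' hzero

theorem stmt7    (a b c : ℕ → ℝ)
    (ha : ∀ n : ℕ, 0 < a n) (hc : ∀ n : ℕ, 1 ≤ n → 0 < c n)
    (p : ℕ → ℝ → ℝ)
    (hp0 : ∀ y : ℝ, p 0 y = 1)
    (hp1 : ∀ y : ℝ, p 1 y = (y - b 0) / a 0)
    (hrec : ∀ n : ℕ, 1 ≤ n → ∀ y : ℝ,
      p 1 y * p n y = a n * p (n + 1) y + b n * p n y + c n * p (n - 1) y)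
    (hnorm : ∀ n : ℕ, p n 1 = 1)
    (g : ℕ → ℕ → ℕ → ℝ)
    (hg : ∀ n k : ℕ, ∀ y : ℝ,
      p n y * p k y = ∑ j ∈ Finset.range (n + k + 1), g n k j * p j y)
    (hgnn : ∀ n k j : ℕ, 0 ≤ g n k j)
    (μ : Measure ℝ) [IsProbabilityMeasure μ]
    (hcsupp : ∃ K : Set ℝ, IsCompact K ∧ μ Kᶜ = 0)
    (horth : ∀ n k : ℕ, n ≠ k → ∫ y, p n y * p k y ∂μ = 0)
    (h : ℕ → ℝ)
    (hh : ∀ n : ℕ, h n = (∫ y, (p n y) ^ 2 ∂μ)⁻¹)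
    (lam beta : ℕ → ℝ)
    (hlam0 : lam 0 = 0) (hlam1 : lam 1 = a 0 * Real.sqrt (c 1))
    (hlam : ∀ n : ℕ, 2 ≤ n → lam n = a 0 * Real.sqrt (c n * a (n - 1)))
    (hbeta0 : beta 0 = b 0) (hbeta : ∀ n : ℕ, 1 ≤ n → beta n = a 0 * b n + b 0)
    (hNevai1 : Tendsto lam atTop (𝓝 (1 / 2)))
    (hNevai2 : Tendsto beta atTop (𝓝 0))
    (hBV : Summable fun n : ℕ =>
      |lam (n + 2) - lam (n + 1)| + |beta (n + 2) - beta (n + 1)|)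
 :
    ∀ x ∈ measSupport μ, x ∉ Set.Icc (-1 : ℝ) 1 → x < -1 :=
  stmt7_general a b c ha hc p hp0 hp1 hrec hnorm g hg hgnn μ hcsupp horth beta hbeta hNevai2
end
end

section
/- If for every x ∈ 𝒟 with α_x ≠ 1 (i.e. for every nontrivial bounded hermitian character of the polynomial hypergroup) there exists exactly one α_x-mean on ℓ∞(ℕ₀), then 1 ∈ supp μ (the trivial character lies in the support of the Plancherel measure). -/
/-!
Suppose `1 ∉ supp μ`. Since the linearization coefficients are nonnegative and sum to `1`, every
power of `p₁` is a convex combination of the `pⱼ`, so `∫ p₁²ᵐ dμ ≤ 1` for all `m` and `μ` lives on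
`(-∞, 1]`; hence on some `[A, B]` with `B < 1`. Fix `x ∈ (B, 1)`.

The zeros of the orthogonal polynomials lie in `[A, B]`, so
`|pₙ(x)| = ∏ |x - r| / |1 - r| ≤ ((x - A) / (1 - A))ⁿ`: the character `αₓ` is nontrivial and lies
in `c₀`. Testing the Christoffel extremal property against `((X - A) / (x - A))ᴺ` shows that
`∑_{k<N} h(k) pₖ(x)²` is unbounded.

An `αₓ`-mean `m` satisfies `m(δₙ) = h(n) pₙ(x) m(δ₀)`, because `Tₙ δ₀ = h(n)⁻¹ δₙ`. On the
truncations of `αₓ`, whose norms are at most `‖αₓ‖`, `m` takes the values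
`(∑_{k<N} h(k) pₖ(x)²) m(δ₀)`, so `m(δ₀) = 0`. Thus `m` vanishes on finitely supported sequences,
and by continuity on `αₓ ∈ c₀`, contradicting `m(αₓ) = 1`.
-/

open Filter Topology MeasureTheory

noncomputable section

open Polynomial Set

namespace Polynomial

theorem exists_sign_of_even_rootMultiplicity {F : ℝ[X]} {A B : ℝ}
    (heven : ∀ r ∈ Icc A B, Even (F.rootMultiplicity r)) :
    ∃ σ : ℝ, σ ≠ 0 ∧ ∀ y ∈ Icc A B, 0 ≤ σ * F.eval y := by
  induction hd : F.natDegree using Nat.strong_induction_on generalizing F with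
  | _ d ih =>
  by_cases hF : F = 0
  · exact ⟨1, one_ne_zero, by simp [hF]⟩
  by_cases! hroot : ∃ r ∈ Icc A B, F.IsRoot r
  · obtain ⟨r, hr, hFr⟩ := hroot
    obtain ⟨G, rfl⟩ : (X - C r) ^ 2 ∣ F := by
      have : 2 ≤ F.rootMultiplicity r := by
        obtain ⟨k, hk⟩ := heven r hr
        have := (rootMultiplicity_pos hF).2 hFr
        omega
      exact (pow_dvd_pow _ this).trans (pow_rootMultiplicity_dvd F r)
    have hG : G ≠ 0 := right_ne_zero_of_mul hF
    have hGeven : ∀ y ∈ Icc A B, Even (G.rootMultiplicity y) := by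
      intro y hy
      have := heven y hy
      rw [rootMultiplicity_mul hF, sq,
        rootMultiplicity_mul (by simpa [sq] using left_ne_zero_of_mul hF)] at this
      exact (Nat.even_add.mp this).mp (Even.add_self _)
    have hdeg : G.natDegree < d := by
      rw [← hd, natDegree_mul (left_ne_zero_of_mul hF) hG, natDegree_pow, natDegree_X_sub_C]
      omega
    obtain ⟨σ, hσ, hσG⟩ := ih _ hdeg hGeven rfl
    refine ⟨σ, hσ, fun y hy => ?_⟩
    rw [eval_mul, mul_left_comm]
    exact mul_nonneg (by simp [sq_nonneg]) (hσG y hy)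
  rcases lt_or_ge B A with hBA | hAB
  · exact ⟨1, one_ne_zero, fun y hy => absurd (hy.1.trans hy.2) hBA.not_ge⟩
  refine ⟨F.eval A, hroot A ⟨le_rfl, hAB⟩, fun y hy => ?_⟩
  by_contra! hneg
  have h0 : (0 : ℝ) ∈ uIcc (F.eval A) (F.eval y) := by
    rcases mul_neg_iff.mp hneg with h | h
    · exact mem_uIcc.mpr (Or.inr ⟨h.2.le, h.1.le⟩)
    · exact mem_uIcc.mpr (Or.inl ⟨h.1.le, h.2.le⟩)
  obtain ⟨z, hz, hFz⟩ := intermediate_value_uIcc F.continuous.continuousOn h0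
  rw [uIcc_of_le hy.1] at hz
  exact hroot z ⟨hz.1, hz.2.trans hy.2⟩ hFz

theorem eval_eq_leadingCoeff_mul_prod_roots {F : ℝ[X]} (hcard : F.roots.card = F.natDegree)
    (z : ℝ) : F.eval z = F.leadingCoeff * (F.roots.map (z - ·)).prod := by
  conv_lhs => rw [← C_leadingCoeff_mul_prod_multiset_X_sub_C hcard]
  simp [eval_multiset_prod, Multiset.map_map]

theorem abs_eval_le_of_roots_mem_Icc {F : ℝ[X]} {A B x : ℝ} (hAB : A ≤ B)
    (hcard : F.roots.card = F.natDegree) (hroots : ∀ r ∈ F.roots, r ∈ Icc A B)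
    (hBx : B < x) (hx1 : x < 1) :
    |F.eval x| ≤ ((x - A) / (1 - A)) ^ F.natDegree * |F.eval 1| := by
  set ρ := (x - A) / (1 - A)
  have hρ : 0 ≤ ρ := div_nonneg (by linarith) (by linarith)
  have hfactor : ∀ r ∈ F.roots, x - r ≤ ρ * (1 - r) := by
    intro r hr
    obtain ⟨hAr, hrB⟩ := hroots r hr
    rw [div_mul_eq_mul_div, le_div_iff₀ (by linarith)]
    nlinarith
  have hnonneg : ∀ r ∈ F.roots, 0 ≤ x - r := fun r hr => by linarith [(hroots r hr).2]
  rw [eval_eq_leadingCoeff_mul_prod_roots hcard, eval_eq_leadingCoeff_mul_prod_roots hcard,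
    abs_mul, abs_mul, mul_left_comm, ← hcard]
  gcongr
  calc |(F.roots.map (x - ·)).prod| = (F.roots.map (x - ·)).prod :=
        abs_of_nonneg (Multiset.prod_nonneg fun _ h => by
          obtain ⟨r, hr, rfl⟩ := Multiset.mem_map.mp h; exact hnonneg r hr)
    _ ≤ (F.roots.map fun r => ρ * (1 - r)).prod :=
        Multiset.prod_map_le_prod_map₀ _ _ hnonneg hfactor
    _ = ρ ^ F.roots.card * (F.roots.map (1 - ·)).prod := by
        rw [Multiset.prod_map_mul, Multiset.map_const', Multiset.prod_replicate]
    _ ≤ ρ ^ F.roots.card * |(F.roots.map (1 - ·)).prod| := by gcongr; exact le_abs_self _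

end Polynomial

theorem ae_le_one_of_integral_pow_le_one {α : Type*} [MeasurableSpace α] {μ : Measure α}
    [IsFiniteMeasure μ] {f : α → ℝ} (hint : ∀ m, Integrable (fun x => f x ^ (2 * m)) μ)
    (hle : ∀ m, ∫ x, f x ^ (2 * m) ∂μ ≤ 1) : ∀ᵐ x ∂μ, f x ≤ 1 := by
  have hlt : ∀ k : ℕ, ∀ᵐ x ∂μ, f x < 1 + 1 / (k + 1) := fun k => by
    set t : ℝ := 1 + 1 / (k + 1)
    have ht : 1 < t := by simp only [t]; linarith [Nat.one_div_pos_of_nat (α := ℝ) (n := k)]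
    have hbound : ∀ m : ℕ, μ.real {x | t ≤ f x} ≤ ((t ^ 2)⁻¹) ^ m := fun m => by
      have hmarkov := mul_meas_ge_le_integral_of_nonneg
        (ae_of_all _ fun x => (even_two_mul m).pow_nonneg (f x)) (hint m) (t ^ (2 * m))
      have hsub : μ.real {x | t ≤ f x} ≤ μ.real {x | t ^ (2 * m) ≤ f x ^ (2 * m)} :=
        measureReal_mono fun x hx => pow_le_pow_left₀ (zero_le_one.trans ht.le) hx _
      rw [inv_pow, ← pow_mul, ← one_div, le_div_iff₀ (by positivity), mul_comm]
      calc t ^ (2 * m) * μ.real {x | t ≤ f x}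
          ≤ t ^ (2 * m) * μ.real {x | t ^ (2 * m) ≤ f x ^ (2 * m)} := by gcongr
        _ ≤ 1 := hmarkov.trans (hle m)
    have hzero : μ.real {x | t ≤ f x} = 0 :=
      le_antisymm (ge_of_tendsto' (tendsto_pow_atTop_nhds_zero_of_lt_one (by positivity)
        (inv_lt_one_of_one_lt₀ (one_lt_pow₀ ht two_ne_zero))) hbound) measureReal_nonneg
    rw [measureReal_eq_zero_iff, measure_eq_zero_iff_ae_notMem] at hzero
    exact hzero.mono fun x hx => not_le.mp hx
  filter_upwards [ae_all_iff.mpr hlt] with x hx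
  refine le_of_forall_pos_lt_add fun ε hε => ?_
  obtain ⟨k, hk⟩ := exists_nat_one_div_lt hε
  linarith [hx k]

theorem integrable_eval_of_isCompact {μ : Measure ℝ} [IsFiniteMeasure μ] {K : Set ℝ}
    (hK : IsCompact K) (hKc : μ Kᶜ = 0) (F : ℝ[X]) : Integrable (fun y => F.eval y) μ := by
  rw [← Measure.restrict_eq_self_of_ae_mem (measure_eq_zero_iff_ae_notMem.mp hKc |>.mono
    fun y hy => not_not.mp hy)]
  exact F.continuous.continuousOn.integrableOn_compact hK

theorem exists_ae_mem_Icc_of_notMem_measSupport {μ : Measure ℝ} {K : Set ℝ} (hK : IsCompact K)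
    (hKc : μ Kᶜ = 0) {t : ℝ} (ht : t ∉ measSupport μ) (hle : ∀ᵐ y ∂μ, y ≤ t) :
    ∃ A B, A ≤ B ∧ B < t ∧ ∀ᵐ y ∂μ, y ∈ Icc A B := by
  simp only [measSupport, mem_ofPred_eq, not_forall, not_lt, nonpos_iff_eq_zero] at ht
  obtain ⟨U, hU, htU, hμU⟩ := ht
  obtain ⟨ε, hε, hball⟩ := Metric.isOpen_iff.mp hU t htU
  obtain ⟨A, hA⟩ := hK.bddBelow
  refine ⟨min A (t - ε), t - ε, min_le_right _ _, by linarith, ?_⟩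
  filter_upwards [hle, measure_eq_zero_iff_ae_notMem.mp hμU,
    measure_eq_zero_iff_ae_notMem.mp hKc] with y hyt hyU hyK
  have hdist : ¬ dist y t < ε := fun hy => hyU (hball hy)
  rw [Real.dist_eq, abs_of_nonpos (by linarith)] at hdist
  exact ⟨(min_le_left _ _).trans (hA (not_not.mp hyK)), by linarith⟩

namespace Polynomial.Sequence

theorem isUnit_leadingCoeff {K : Type*} [Field K] (P : Sequence K) (i : ℕ) :
    IsUnit (P i).leadingCoeff :=
  isUnit_iff_ne_zero.mpr (leadingCoeff_ne_zero.mpr (P.ne_zero i))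

structure IsOrthogonal (P : Sequence ℝ) (μ : Measure ℝ) : Prop where
  integrable_eval : ∀ F : ℝ[X], Integrable (fun y => F.eval y) μ
  integral_mul_eq_zero : ∀ ⦃m n : ℕ⦄, m ≠ n → ∫ y, (P m).eval y * (P n).eval y ∂μ = 0
  integral_sq_pos : ∀ n, 0 < ∫ y, (P n).eval y ^ 2 ∂μ

variable {P : Sequence ℝ} {μ : Measure ℝ}

theorem repr_eq_zero_of_natDegree_lt {F : ℝ[X]} {n : ℕ} (hF : F.natDegree < n) :
    (P.basis P.isUnit_leadingCoeff).repr F n = 0 := by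
  have hmem : F ∈ Submodule.span ℝ (P.basis P.isUnit_leadingCoeff '' Iio n) := by
    have hb : ⇑(P.basis P.isUnit_leadingCoeff) = P := _root_.funext fun i => P.basis_eq_self _ i
    rw [hb, P.span_degreeLT fun i _ => P.isUnit_leadingCoeff i, mem_degreeLT]
    exact degree_le_natDegree.trans_lt (by exact_mod_cast hF)
  by_contra hne
  exact lt_irrefl n (Module.Basis.mem_span_image _ |>.mp hmem (Finsupp.mem_support_iff.mpr hne))

theorem eval_eq_sum_repr {F : ℝ[X]} {s : Finset ℕ}
    (hs : ((P.basis P.isUnit_leadingCoeff).repr F).support ⊆ s) (y : ℝ) :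
    F.eval y = ∑ k ∈ s, (P.basis P.isUnit_leadingCoeff).repr F k * (P k).eval y := by
  conv_lhs => rw [← (P.basis P.isUnit_leadingCoeff).linearCombination_repr F]
  rw [Finsupp.linearCombination_apply, Finsupp.sum_of_support_subset _ hs _ (by simp),
    eval_finsetSum]
  simp

namespace IsOrthogonal

theorem integral_mul_eq_sum_repr (hP : P.IsOrthogonal μ) {F : ℝ[X]} {s : Finset ℕ}
    (hs : ((P.basis P.isUnit_leadingCoeff).repr F).support ⊆ s) (G : ℝ[X]) :
    ∫ y, G.eval y * F.eval y ∂μ =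
      ∑ k ∈ s, (P.basis P.isUnit_leadingCoeff).repr F k * ∫ y, G.eval y * (P k).eval y ∂μ := by
  simp_rw [eval_eq_sum_repr hs, Finset.mul_sum, mul_left_comm (G.eval _)]
  rw [integral_finsetSum _ fun k _ => ?_]
  · simp_rw [integral_const_mul]
  · simpa using (hP.integrable_eval (G * P k)).const_mul _

theorem integral_mul_eq_repr_mul (hP : P.IsOrthogonal μ) (F : ℝ[X]) (j : ℕ) :
    ∫ y, (P j).eval y * F.eval y ∂μ =
      (P.basis P.isUnit_leadingCoeff).repr F j * ∫ y, (P j).eval y ^ 2 ∂μ := by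
  rw [hP.integral_mul_eq_sum_repr (Finset.subset_insert j _) (P j), Finset.sum_eq_single j]
  · simp_rw [sq]
  · exact fun k _ hkj => by rw [hP.integral_mul_eq_zero hkj.symm, mul_zero]
  · simp

theorem integral_mul_eq_zero_of_natDegree_lt (hP : P.IsOrthogonal μ) {F : ℝ[X]} {n : ℕ}
    (hF : F.natDegree < n) :
    ∫ y, (P n).eval y * F.eval y ∂μ = 0 := by
  rw [hP.integral_mul_eq_repr_mul, repr_eq_zero_of_natDegree_lt hF, zero_mul]

theorem eq_zero_of_ae_eval_eq_zero (hP : P.IsOrthogonal μ) {F : ℝ[X]}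
    (hF : (fun y => F.eval y) =ᵐ[μ] 0) : F = 0 := by
  refine (P.basis P.isUnit_leadingCoeff).forall_coord_eq_zero_iff.mp fun j => ?_
  have hzero : ∫ y, (P j).eval y * F.eval y ∂μ = 0 :=
    integral_eq_zero_of_ae (hF.mono fun y hy => by simp [hy])
  rw [hP.integral_mul_eq_repr_mul] at hzero
  exact (mul_eq_zero.mp hzero).resolve_right (hP.integral_sq_pos j).ne'

theorem card_roots_eq_and_mem_Icc (hP : P.IsOrthogonal μ) {A B : ℝ}
    (hae : ∀ᵐ y ∂μ, y ∈ Icc A B) (n : ℕ) :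
    (P n).roots.card = n ∧ ∀ r ∈ (P n).roots, r ∈ Icc A B := by
  classical
  set s := (P n).roots.toFinset.filter fun r => r ∈ Icc A B ∧ Odd ((P n).rootMultiplicity r)
  have hsub : s ⊆ (P n).roots.toFinset := Finset.filter_subset _ _
  have hmem : ∀ r ∈ Icc A B, r ∈ s ↔ Odd ((P n).rootMultiplicity r) := fun r hr => by
    refine ⟨fun h => (Finset.mem_filter.mp h).2.2, fun hodd => Finset.mem_filter.mpr
      ⟨?_, hr, hodd⟩⟩
    rw [Multiset.mem_toFinset, mem_roots (P.ne_zero n), ← rootMultiplicity_pos (P.ne_zero n)]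
    exact hodd.pos
  -- Otherwise `P n` times the product over its sign changes in `[A, B]` would be a
  -- polynomial of constant sign on the support of `μ` orthogonal to `P n`.
  have hcard : n ≤ s.card := by
    by_contra! hlt
    set q := ∏ r ∈ s, (X - C r)
    have hq : q ≠ 0 := (monic_prod_of_monic _ _ fun r _ => monic_X_sub_C r).ne_zero
    have hPq : P n * q ≠ 0 := mul_ne_zero (P.ne_zero n) hq
    have hqdeg : q.natDegree < n := by
      rwa [natDegree_prod_of_monic _ _ fun r _ => monic_X_sub_C r, Finset.sum_congr rfl
        fun r _ => natDegree_X_sub_C r, Finset.sum_const, smul_eq_mul, mul_one]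
    have heven : ∀ r ∈ Icc A B, Even ((P n * q).rootMultiplicity r) := fun r hr => by
      rw [rootMultiplicity_mul hPq, ← count_roots q, roots_prod_X_sub_C]
      by_cases hrs : r ∈ s
      · rw [Multiset.count_eq_one_of_mem s.nodup hrs]
        exact ((hmem r hr).mp hrs).add_one
      · rw [Multiset.count_eq_zero.mpr hrs, add_zero]
        exact Nat.not_odd_iff_even.mp ((hmem r hr).not.mp hrs)
    obtain ⟨σ, hσ, hsign⟩ := exists_sign_of_even_rootMultiplicity heven
    have hzero : ∫ y, (C σ * (P n * q)).eval y ∂μ = 0 := by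
      simp_rw [eval_mul, eval_C, integral_const_mul]
      rw [hP.integral_mul_eq_zero_of_natDegree_lt hqdeg, mul_zero]
    have hae0 := (integral_eq_zero_iff_of_nonneg_ae (hae.mono fun y hy => by
      simpa using hsign y hy) (hP.integrable_eval _)).mp hzero
    exact mul_ne_zero (C_ne_zero.mpr hσ) hPq (hP.eq_zero_of_ae_eval_eq_zero hae0)
  have hroots : (P n).roots.card ≤ n := (card_roots' _).trans (P.natDegree_eq n).le
  have htoFinset : s.card ≤ (P n).roots.toFinset.card := Finset.card_le_card hsub
  have hdedup := Multiset.toFinset_card_le (P n).roots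
  have hs : s = (P n).roots.toFinset := Finset.eq_of_subset_of_card_le hsub (by omega)
  refine ⟨by omega, fun r hr => ?_⟩
  rw [← Multiset.mem_toFinset, ← hs] at hr
  exact (Finset.mem_filter.mp hr).2.1

theorem exists_abs_eval_le_pow (hP : P.IsOrthogonal μ) {A B x : ℝ} (hAB : A ≤ B)
    (hae : ∀ᵐ y ∂μ, y ∈ Icc A B) (hBx : B < x) (hx1 : x < 1) (h1 : ∀ n, (P n).eval 1 = 1) :
    ∃ ρ, 0 ≤ ρ ∧ ρ < 1 ∧ ∀ n, |(P n).eval x| ≤ ρ ^ n := by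
  refine ⟨(x - A) / (1 - A), div_nonneg (by linarith) (by linarith),
    (div_lt_one (by linarith)).mpr (by linarith), fun n => ?_⟩
  obtain ⟨hcard, hmem⟩ := hP.card_roots_eq_and_mem_Icc hae n
  simpa [P.natDegree_eq n, h1] using
    abs_eval_le_of_roots_mem_Icc hAB (hcard.trans (P.natDegree_eq n).symm) hmem hBx hx1

theorem sq_eval_le_integral_sq_mul_sum (hP : P.IsOrthogonal μ) {F : ℝ[X]} {N : ℕ}
    (hF : F.natDegree ≤ N) (x : ℝ) :
    F.eval x ^ 2 ≤ (∫ y, F.eval y ^ 2 ∂μ) *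
      ∑ k ∈ Finset.range (N + 1), (∫ y, (P k).eval y ^ 2 ∂μ)⁻¹ * (P k).eval x ^ 2 := by
  set c := (P.basis P.isUnit_leadingCoeff).repr F
  set γ := fun k => ∫ y, (P k).eval y ^ 2 ∂μ
  have hsupp : c.support ⊆ Finset.range (N + 1) := fun k hk => by
    by_contra hkN
    exact Finsupp.mem_support_iff.mp hk
      (repr_eq_zero_of_natDegree_lt (hF.trans_lt (by simpa using hkN)))
  have hnorm : ∫ y, F.eval y ^ 2 ∂μ = ∑ k ∈ Finset.range (N + 1), c k ^ 2 * γ k := by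
    simp_rw [sq, hP.integral_mul_eq_sum_repr hsupp F]
    refine Finset.sum_congr rfl fun k _ => ?_
    simp_rw [mul_comm (F.eval _), hP.integral_mul_eq_repr_mul F k]
    ring
  rw [eval_eq_sum_repr hsupp, hnorm]
  exact Finset.sum_sq_le_sum_mul_sum_of_sq_le_mul _
    (fun k _ => mul_nonneg (sq_nonneg _) (hP.integral_sq_pos k).le)
    (fun k _ => mul_nonneg (inv_nonneg.mpr (hP.integral_sq_pos k).le) (sq_nonneg _))
    (fun k _ => le_of_eq (by field_simp [(hP.integral_sq_pos k).ne']; simp only [c, γ]; ring))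

theorem not_bddAbove_christoffel_sum [IsProbabilityMeasure μ] (hP : P.IsOrthogonal μ)
    {A B x : ℝ} (hAB : A ≤ B) (hae : ∀ᵐ y ∂μ, y ∈ Icc A B) (hBx : B < x) :
    ¬ BddAbove (range fun N =>
      ∑ k ∈ Finset.range N, (∫ y, (P k).eval y ^ 2 ∂μ)⁻¹ * (P k).eval x ^ 2) := by
  rintro ⟨S, hS⟩
  set θ := (B - A) / (x - A)
  have hxA : 0 < x - A := by linarith
  have hθ0 : 0 ≤ θ := div_nonneg (by linarith) hxA.le
  have hθ1 : θ < 1 := (div_lt_one hxA).mpr (by linarith)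
  -- Test against `((X - A) / (x - A)) ^ N`, which is `1` at `x` and at most `θ ^ N` on `[A, B]`.
  have hbound : ∀ N : ℕ, 1 ≤ (θ ^ 2) ^ N * S := fun N => by
    set F := (C (x - A)⁻¹ * (X - C A)) ^ N
    have hF : ∀ y, F.eval y = ((y - A) / (x - A)) ^ N := fun y => by
      simp [F, div_eq_inv_mul]
    have hdeg : F.natDegree ≤ N :=
      (natDegree_pow_le_of_le N ((natDegree_C_mul_le _ _).trans_eq
        (natDegree_X_sub_C A))).trans_eq (mul_one N)
    have hnorm : ∫ y, F.eval y ^ 2 ∂μ ≤ (θ ^ 2) ^ N := by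
      calc ∫ y, F.eval y ^ 2 ∂μ ≤ ∫ _, (θ ^ 2) ^ N ∂μ :=
            integral_mono_ae ((hP.integrable_eval (F ^ 2)).congr
              (.of_forall fun y => eval_pow _)) (integrable_const _)
              (hae.mono fun y hy => by
                dsimp only
                rw [hF, ← pow_mul, mul_comm, pow_mul]
                gcongr
                · exact div_nonneg (by linarith [hy.1]) hxA.le
                · exact div_le_div_of_nonneg_right (by linarith [hy.2]) hxA.le)
        _ = (θ ^ 2) ^ N := by simp
    have hsum := hP.sq_eval_le_integral_sq_mul_sum hdeg x
    have hSN := hS (mem_range_self (N + 1))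
    rw [hF, div_self hxA.ne', one_pow, one_pow] at hsum
    have hnonneg : 0 ≤ ∑ k ∈ Finset.range (N + 1),
        (∫ y, (P k).eval y ^ 2 ∂μ)⁻¹ * (P k).eval x ^ 2 :=
      Finset.sum_nonneg fun k _ => by positivity
    calc (1 : ℝ) ≤ _ := hsum
      _ ≤ (θ ^ 2) ^ N * _ := mul_le_mul_of_nonneg_right hnorm hnonneg
      _ ≤ (θ ^ 2) ^ N * S := mul_le_mul_of_nonneg_left hSN (by positivity)
  have hlim : Tendsto (fun N : ℕ => (θ ^ 2) ^ N * S) atTop (𝓝 0) := by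
    simpa using (tendsto_pow_atTop_nhds_zero_of_lt_one (sq_nonneg θ)
      (by nlinarith)).mul_const S
  exact absurd (ge_of_tendsto' hlim hbound) (by norm_num)

end IsOrthogonal

end Polynomial.Sequence

def threeTermPoly (a b c : ℕ → ℝ) : ℕ → ℝ[X]
  | 0 => 1
  | 1 => C (a 0)⁻¹ * (X - C (b 0))
  | n + 2 => C (a (n + 1))⁻¹ * ((threeTermPoly a b c 1 - C (b (n + 1))) *
      threeTermPoly a b c (n + 1) - C (c (n + 1)) * threeTermPoly a b c n)

section ThreeTerm

variable {a b c : ℕ → ℝ}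

theorem degree_threeTermPoly (ha : ∀ n, 0 < a n) (n : ℕ) :
    (threeTermPoly a b c n).degree = n := by
  have h1 : (threeTermPoly a b c 1).degree = 1 := by
    rw [threeTermPoly, degree_C_mul (inv_ne_zero (ha 0).ne'), degree_X_sub_C]
  induction n using Nat.strong_induction_on with
  | _ n ih =>
  match n with
  | 0 => simp [threeTermPoly]
  | 1 => exact h1
  | n + 2 =>
    have hlead : ((threeTermPoly a b c 1 - C (b (n + 1))) * threeTermPoly a b c (n + 1)).degree
        = (n + 2 : ℕ) := by
      rw [degree_mul, degree_sub_C (by rw [h1]; exact zero_lt_one), h1, ih (n + 1) (by omega)]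
      norm_cast
      omega
    have hlow : (C (c (n + 1)) * threeTermPoly a b c n).degree < (n + 2 : ℕ) := by
      refine (degree_mul_le _ _).trans_lt ?_
      rw [ih n (by omega)]
      calc (C (c (n + 1))).degree + (n : ℕ) ≤ 0 + (n : ℕ) := by gcongr; exact degree_C_le
        _ < (n + 2 : ℕ) := by norm_cast; omega
    rw [threeTermPoly.eq_3, degree_C_mul (inv_ne_zero (ha _).ne'),
      degree_sub_eq_left_of_degree_lt (hlead ▸ hlow), hlead]

theorem eval_threeTermPoly (ha : ∀ n, 0 < a n) {p : ℕ → ℝ → ℝ} (hp0 : ∀ y, p 0 y = 1)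
    (hp1 : ∀ y, p 1 y = (y - b 0) / a 0)
    (hrec : ∀ n, 1 ≤ n → ∀ y,
      p 1 y * p n y = a n * p (n + 1) y + b n * p n y + c n * p (n - 1) y)
    (n : ℕ) (y : ℝ) : (threeTermPoly a b c n).eval y = p n y := by
  have h1 : (threeTermPoly a b c 1).eval y = p 1 y := by
    simp [threeTermPoly, hp1, div_eq_inv_mul]
  induction n using Nat.strong_induction_on with
  | _ n ih =>
  match n with
  | 0 => simp [threeTermPoly, hp0]
  | 1 => exact h1
  | n + 2 =>
    have hr := hrec (n + 1) (by omega) y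
    rw [Nat.add_sub_cancel] at hr
    simp only [threeTermPoly.eq_3, eval_mul, eval_sub, eval_C, h1, ih (n + 1) (by omega),
      ih n (by omega)]
    field_simp [(ha (n + 1)).ne']
    linear_combination hr

end ThreeTerm

section Hypergroup

variable {p : ℕ → ℝ → ℝ} {g : ℕ → ℕ → ℕ → ℝ} {μ : Measure ℝ}

theorem sum_linCoeff_eq_one
    (hg : ∀ n k y, p n y * p k y = ∑ j ∈ Finset.range (n + k + 1), g n k j * p j y)
    (hnorm : ∀ n, p n 1 = 1) (n k : ℕ) :
    ∑ j ∈ Finset.range (n + k + 1), g n k j = 1 := by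
  simpa [hnorm] using (hg n k 1).symm

theorem integrable_of_integrable_mul (hp0 : ∀ y, p 0 y = 1)
    (hint : ∀ n k, Integrable (fun y => p n y * p k y) μ) (n : ℕ) : Integrable (p n) μ := by
  simpa [hp0] using hint n 0

theorem integral_eq_ite [IsProbabilityMeasure μ] (hp0 : ∀ y, p 0 y = 1)
    (horth : ∀ n k, n ≠ k → ∫ y, p n y * p k y ∂μ = 0) (j : ℕ) :
    ∫ y, p j y ∂μ = if j = 0 then 1 else 0 := by
  split_ifs with hj
  · simp [hj, hp0]
  · simpa [hp0] using horth j 0 hj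

theorem integral_mul_eq_linCoeff_zero [IsProbabilityMeasure μ] (hp0 : ∀ y, p 0 y = 1)
    (hg : ∀ n k y, p n y * p k y = ∑ j ∈ Finset.range (n + k + 1), g n k j * p j y)
    (horth : ∀ n k, n ≠ k → ∫ y, p n y * p k y ∂μ = 0)
    (hint : ∀ n k, Integrable (fun y => p n y * p k y) μ) (n k : ℕ) :
    ∫ y, p n y * p k y ∂μ = g n k 0 := by
  simp_rw [hg, integral_finsetSum _ fun j _ =>
    (integrable_of_integrable_mul hp0 hint j).const_mul _, integral_const_mul,
    integral_eq_ite hp0 horth]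
  simp

theorem linCoeff_zero_eq_ite [IsProbabilityMeasure μ] (hp0 : ∀ y, p 0 y = 1)
    (hg : ∀ n k y, p n y * p k y = ∑ j ∈ Finset.range (n + k + 1), g n k j * p j y)
    (horth : ∀ n k, n ≠ k → ∫ y, p n y * p k y ∂μ = 0)
    (hint : ∀ n k, Integrable (fun y => p n y * p k y) μ) {h : ℕ → ℝ}
    (hh : ∀ n, h n = (∫ y, p n y ^ 2 ∂μ)⁻¹) (n k : ℕ) :
    g n k 0 = if k = n then (h n)⁻¹ else 0 := by
  rw [← integral_mul_eq_linCoeff_zero hp0 hg horth hint n k, hh, inv_inv]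
  split_ifs with hkn
  · simp [hkn, sq]
  · exact horth n k (Ne.symm hkn)

theorem integral_sq_pos_of_recurrence [IsProbabilityMeasure μ] {a b c : ℕ → ℝ}
    (hc : ∀ n, 1 ≤ n → 0 < c n) (hp0 : ∀ y, p 0 y = 1)
    (hrec : ∀ n, 1 ≤ n → ∀ y,
      p 1 y * p n y = a n * p (n + 1) y + b n * p n y + c n * p (n - 1) y)
    (horth : ∀ n k, n ≠ k → ∫ y, p n y * p k y ∂μ = 0)
    (hint : ∀ n k, Integrable (fun y => p n y * p k y) μ) (n : ℕ) :
    0 < ∫ y, p n y ^ 2 ∂μ := by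
  induction n with
  | zero => simp [hp0]
  | succ n ih =>
    by_contra! hle
    simp_rw [sq] at hle ih
    have hzero : (fun y => p (n + 1) y) =ᵐ[μ] 0 := by
      have := (integral_eq_zero_iff_of_nonneg (fun y => mul_self_nonneg _) (hint _ _)).mp
        (le_antisymm hle (integral_nonneg fun y => mul_self_nonneg _))
      exact this.mono fun y hy => mul_self_eq_zero.mp hy
    -- integrating the recurrence at `n + 1` against `p n` leaves only `c (n + 1) * ‖p n‖²`
    have hrec' : ∫ y, (a (n + 1) * p (n + 2) y + c (n + 1) * p n y) * p n y ∂μ = 0 := by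
      refine integral_eq_zero_of_ae (hzero.mono fun y hy => ?_)
      have h := hrec (n + 1) (by omega) y
      simp only [Pi.zero_apply] at hy ⊢
      rw [Nat.add_sub_cancel, hy] at h
      linear_combination -(p n y) * h
    simp_rw [add_mul, mul_assoc] at hrec'
    rw [integral_add ((hint _ _).const_mul _) ((hint _ _).const_mul _), integral_const_mul,
      integral_const_mul, horth _ _ (by omega), mul_zero, zero_add] at hrec'
    exact (mul_pos (hc (n + 1) (by omega)) ih).ne' hrec'

theorem mul_mem_convexHull
    (hg : ∀ n k y, p n y * p k y = ∑ j ∈ Finset.range (n + k + 1), g n k j * p j y)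
    (hgnn : ∀ n k j, 0 ≤ g n k j) (hnorm : ∀ n, p n 1 = 1) (n : ℕ) {f : ℝ → ℝ}
    (hf : f ∈ convexHull ℝ (range p)) : p n * f ∈ convexHull ℝ (range p) := by
  have hgen : range p ⊆ LinearMap.mulLeft ℝ (p n) ⁻¹' convexHull ℝ (range p) := by
    rintro _ ⟨k, rfl⟩
    have hexp : p n * p k = ∑ j ∈ Finset.range (n + k + 1), g n k j • p j :=
      _root_.funext fun y => by simp [hg]
    rw [mem_preimage, LinearMap.mulLeft_apply, hexp]
    exact (convex_convexHull ℝ _).sum_mem (fun j _ => hgnn n k j)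
      (sum_linCoeff_eq_one hg hnorm n k) fun j _ => subset_convexHull ℝ _ (mem_range_self j)
  exact convexHull_min hgen ((convex_convexHull ℝ _).linear_preimage _) hf

theorem pow_mem_convexHull (hp0 : ∀ y, p 0 y = 1)
    (hg : ∀ n k y, p n y * p k y = ∑ j ∈ Finset.range (n + k + 1), g n k j * p j y)
    (hgnn : ∀ n k j, 0 ≤ g n k j) (hnorm : ∀ n, p n 1 = 1) (n m : ℕ) :
    p n ^ m ∈ convexHull ℝ (range p) := by
  induction m with
  | zero => exact subset_convexHull ℝ _ ⟨0, _root_.funext hp0⟩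
  | succ m ih => rw [pow_succ']; exact mul_mem_convexHull hg hgnn hnorm n ih

theorem integral_le_one_of_mem_convexHull [IsProbabilityMeasure μ] (hp0 : ∀ y, p 0 y = 1)
    (horth : ∀ n k, n ≠ k → ∫ y, p n y * p k y ∂μ = 0)
    (hint : ∀ n k, Integrable (fun y => p n y * p k y) μ) {f : ℝ → ℝ}
    (hf : f ∈ convexHull ℝ (range p)) : Integrable f μ ∧ ∫ y, f y ∂μ ≤ 1 := by
  refine convexHull_min (t := {f | Integrable f μ ∧ ∫ y, f y ∂μ ≤ 1}) ?_ ?_ hf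
  · rintro _ ⟨j, rfl⟩
    refine ⟨integrable_of_integrable_mul hp0 hint j, ?_⟩
    rw [integral_eq_ite hp0 horth]
    split_ifs <;> norm_num
  · rintro f ⟨hf, hf1⟩ f' ⟨hf', hf'1⟩ s t hs ht hst
    refine ⟨(hf.smul s).add (hf'.smul t), ?_⟩
    simp only [Pi.add_apply, Pi.smul_apply, smul_eq_mul]
    rw [integral_add (hf.const_mul s) (hf'.const_mul t), integral_const_mul, integral_const_mul]
    nlinarith

theorem ae_le_one_of_nonneg_linCoeff [IsProbabilityMeasure μ] {a b : ℕ → ℝ} (ha : ∀ n, 0 < a n)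
    (hp0 : ∀ y, p 0 y = 1) (hp1 : ∀ y, p 1 y = (y - b 0) / a 0) (hnorm : ∀ n, p n 1 = 1)
    (hg : ∀ n k y, p n y * p k y = ∑ j ∈ Finset.range (n + k + 1), g n k j * p j y)
    (hgnn : ∀ n k j, 0 ≤ g n k j) (horth : ∀ n k, n ≠ k → ∫ y, p n y * p k y ∂μ = 0)
    (hint : ∀ n k, Integrable (fun y => p n y * p k y) μ) : ∀ᵐ y ∂μ, y ≤ 1 := by
  have hmoment := fun m => integral_le_one_of_mem_convexHull hp0 horth hint
    (pow_mem_convexHull hp0 hg hgnn hnorm 1 (2 * m))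
  filter_upwards [ae_le_one_of_integral_pow_le_one (fun m => (hmoment m).1)
    (fun m => (hmoment m).2)] with y hy
  have h1 := hnorm 1
  rw [hp1, div_eq_one_iff_eq (ha 0).ne'] at h1
  rw [hp1, div_le_one (ha 0)] at hy
  linarith

end Hypergroup

open scoped BoundedContinuousFunction

def basisSeq (j : ℕ) : ℕ →ᵇ ℝ :=
  BoundedContinuousFunction.ofNormedAddCommGroupDiscrete (Pi.single j 1) 1 fun k => by
    by_cases hk : k = j <;> simp [hk]

theorem basisSeq_apply (j k : ℕ) : basisSeq j k = if k = j then 1 else 0 :=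
  Pi.single_apply j 1 k

def truncation (α : ℕ →ᵇ ℝ) (N : ℕ) : ℕ →ᵇ ℝ :=
  ∑ k ∈ Finset.range N, α k • basisSeq k

theorem truncation_apply (α : ℕ →ᵇ ℝ) (N k : ℕ) :
    truncation α N k = if k < N then α k else 0 := by
  simp [truncation, basisSeq_apply]

theorem norm_truncation_le (α : ℕ →ᵇ ℝ) (N : ℕ) : ‖truncation α N‖ ≤ ‖α‖ :=
  (BoundedContinuousFunction.norm_le (norm_nonneg _)).mpr fun k => by
    rw [truncation_apply]
    split_ifs
    · exact α.norm_coe_le_norm k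
    · simp

theorem tendsto_truncation {α : ℕ →ᵇ ℝ} (hα : Tendsto α atTop (𝓝 0)) :
    Tendsto (truncation α) atTop (𝓝 α) := by
  refine Metric.tendsto_atTop.mpr fun ε hε => ?_
  obtain ⟨N, hN⟩ := Metric.tendsto_atTop.mp hα (ε / 2) (half_pos hε)
  refine ⟨N, fun n hn => lt_of_le_of_lt ?_ (half_lt_self hε)⟩
  refine (BoundedContinuousFunction.dist_le (half_pos hε).le).mpr fun k => ?_
  rw [truncation_apply]
  split_ifs with hk
  · simpa using (half_pos hε).le
  · rw [dist_comm]
    exact (hN k (by omega)).le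

namespace IsAlphaMean

variable {g : ℕ → ℕ → ℕ → ℝ} {α : ℕ →ᵇ ℝ} {m : (ℕ →ᵇ ℝ) →L[ℝ] ℝ} {h : ℕ → ℝ}

theorem apply_basisSeq (hm : IsAlphaMean g α m) (hh : ∀ n, h n ≠ 0)
    (hg0 : ∀ n k, g n k 0 = if k = n then (h n)⁻¹ else 0) (n : ℕ) :
    m (basisSeq n) = h n * α n * m (basisSeq 0) := by
  have hT := hm.2 n (basisSeq 0) ((h n)⁻¹ • basisSeq n) fun k => by
    simp [basisSeq_apply, hg0]
  rw [map_smul, smul_eq_mul] at hT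
  field_simp [hh n] at hT ⊢
  linear_combination hT

theorem apply_truncation (hm : IsAlphaMean g α m) (hh : ∀ n, h n ≠ 0)
    (hg0 : ∀ n k, g n k 0 = if k = n then (h n)⁻¹ else 0) (N : ℕ) :
    m (truncation α N) = (∑ k ∈ Finset.range N, h k * α k ^ 2) * m (basisSeq 0) := by
  rw [truncation, map_sum, Finset.sum_mul]
  refine Finset.sum_congr rfl fun k _ => ?_
  rw [map_smul, smul_eq_mul, hm.apply_basisSeq hh hg0 k]
  ring

theorem apply_basisSeq_zero (hm : IsAlphaMean g α m) (hh : ∀ n, h n ≠ 0)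
    (hg0 : ∀ n k, g n k 0 = if k = n then (h n)⁻¹ else 0)
    (hS : ¬ BddAbove (range fun N => ∑ k ∈ Finset.range N, h k * α k ^ 2)) :
    m (basisSeq 0) = 0 := by
  by_contra h0
  refine hS ⟨‖m‖ * ‖α‖ / |m (basisSeq 0)|, ?_⟩
  rintro _ ⟨N, rfl⟩
  rw [le_div_iff₀ (abs_pos.mpr h0)]
  calc (∑ k ∈ Finset.range N, h k * α k ^ 2) * |m (basisSeq 0)|
      ≤ |(∑ k ∈ Finset.range N, h k * α k ^ 2) * m (basisSeq 0)| := by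
        rw [abs_mul]; gcongr; exact le_abs_self _
    _ = ‖m (truncation α N)‖ := by rw [hm.apply_truncation hh hg0, Real.norm_eq_abs]
    _ ≤ ‖m‖ * ‖truncation α N‖ := m.le_opNorm _
    _ ≤ ‖m‖ * ‖α‖ := by gcongr; exact norm_truncation_le α N

end IsAlphaMean

theorem not_isAlphaMean_of_tendsto_zero {g : ℕ → ℕ → ℕ → ℝ} {h : ℕ → ℝ} (hh : ∀ n, h n ≠ 0)
    (hg0 : ∀ n k, g n k 0 = if k = n then (h n)⁻¹ else 0) {α : ℕ →ᵇ ℝ}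
    (hα : Tendsto α atTop (𝓝 0))
    (hS : ¬ BddAbove (range fun N => ∑ k ∈ Finset.range N, h k * α k ^ 2))
    (m : (ℕ →ᵇ ℝ) →L[ℝ] ℝ) : ¬ IsAlphaMean g α m := by
  intro hm
  have hlim : Tendsto (fun N => m (truncation α N)) atTop (𝓝 (m α)) :=
    (m.continuous.tendsto α).comp (tendsto_truncation hα)
  simp_rw [hm.apply_truncation hh hg0, hm.apply_basisSeq_zero hh hg0 hS, mul_zero, hm.1] at hlim
  exact one_ne_zero (tendsto_nhds_unique hlim tendsto_const_nhds)

theorem stmt14    (a b c : ℕ → ℝ)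
    (ha : ∀ n : ℕ, 0 < a n) (hc : ∀ n : ℕ, 1 ≤ n → 0 < c n)
    (p : ℕ → ℝ → ℝ)
    (hp0 : ∀ y : ℝ, p 0 y = 1)
    (hp1 : ∀ y : ℝ, p 1 y = (y - b 0) / a 0)
    (hrec : ∀ n : ℕ, 1 ≤ n → ∀ y : ℝ,
      p 1 y * p n y = a n * p (n + 1) y + b n * p n y + c n * p (n - 1) y)
    (hnorm : ∀ n : ℕ, p n 1 = 1)
    (g : ℕ → ℕ → ℕ → ℝ)
    (hg : ∀ n k : ℕ, ∀ y : ℝ,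
      p n y * p k y = ∑ j ∈ Finset.range (n + k + 1), g n k j * p j y)
    (hgnn : ∀ n k j : ℕ, 0 ≤ g n k j)
    (μ : Measure ℝ) [IsProbabilityMeasure μ]
    (hcsupp : ∃ K : Set ℝ, IsCompact K ∧ μ Kᶜ = 0)
    (horth : ∀ n k : ℕ, n ≠ k → ∫ y, p n y * p k y ∂μ = 0)
    (h : ℕ → ℝ)
    (hh : ∀ n : ℕ, h n = (∫ y, (p n y) ^ 2 ∂μ)⁻¹)
    (hamen : ∀ (x : ℝ) (αx : BoundedContinuousFunction ℕ ℝ),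
      (∀ n : ℕ, αx n = p n x) → αx ≠ 1 →
      ∃! m : BoundedContinuousFunction ℕ ℝ →L[ℝ] ℝ, IsAlphaMean g αx m) :
    (1 : ℝ) ∈ measSupport μ := by
  by_contra h1
  obtain ⟨K, hK, hKc⟩ := hcsupp
  let P : Sequence ℝ := ⟨threeTermPoly a b c, degree_threeTermPoly ha⟩
  have heval : ∀ n y, (P n).eval y = p n y := eval_threeTermPoly ha hp0 hp1 hrec
  have hint := integrable_eval_of_isCompact hK hKc
  have hpint (n k : ℕ) : Integrable (fun y => p n y * p k y) μ := by
    simpa only [eval_mul, heval] using hint (P n * P k)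
  have hγ := integral_sq_pos_of_recurrence hc hp0 hrec horth hpint
  have hP : P.IsOrthogonal μ := ⟨hint, fun m n hmn => by simpa only [heval] using horth m n hmn,
    fun n => by simpa only [heval] using hγ n⟩
  obtain ⟨A, B, hAB, hB1, hae⟩ := exists_ae_mem_Icc_of_notMem_measSupport hK hKc h1
    (ae_le_one_of_nonneg_linCoeff ha hp0 hp1 hnorm hg hgnn horth hpint)
  set x := (B + 1) / 2 with hx
  obtain ⟨ρ, hρ0, hρ1, hpx⟩ := hP.exists_abs_eval_le_pow hAB hae (by linarith) (by linarith)
    (by simpa only [heval] using hnorm)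
  simp only [heval] at hpx
  let αx : ℕ →ᵇ ℝ := .ofNormedAddCommGroupDiscrete (fun n => p n x) 1
    fun n => (hpx n).trans (pow_le_one₀ hρ0 hρ1.le)
  have hαx_apply (n : ℕ) : αx n = p n x := rfl
  have hαx : αx ≠ 1 := fun hone => by
    have hx1 : p 1 x = p 1 1 := by rw [hnorm]; exact DFunLike.congr_fun hone 1
    rw [hp1, hp1, div_left_inj' (ha 0).ne'] at hx1
    linarith
  obtain ⟨m, hm, -⟩ := hamen x αx hαx_apply hαx
  refine not_isAlphaMean_of_tendsto_zero (fun n => hh n ▸ inv_ne_zero (hγ n).ne')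
    (linCoeff_zero_eq_ite hp0 hg horth hpint hh)
    (squeeze_zero_norm hpx (tendsto_pow_atTop_nhds_zero_of_lt_one hρ0 hρ1)) ?_ m hm
  simpa [hh, heval, hαx_apply] using hP.not_bddAbove_christoffel_sum hAB hae (by linarith)
end
end
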